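/- Relative Kruskal tree theorem: for every planar rooted tree T, the divisibility quasi-order on the set PT_T of PT-morphisms with domain T is a well-quasi-order; that is, for every sequence of morphisms f_1, f_2, ... in PT with domain T there exist indices i < j and a morphism h in PT with f_j = h ∘ f_i. -/

import Mathlib

/-- A finite rooted tree, encoded as a finite partial order (the tree order,
with the root as maximum element) in which the set of elements above any
vertex is a chain (the path from the vertex to the root). -/
structure RTree where
  V : Type
  finite : Finite V
  le : V → V → Prop
  le_refl : ∀ v, le v v
  le_antisymm : ∀ v w, le v w → le w v → v = w
  le_trans : ∀ u v w, le u v → le v w → le u w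
  root : V
  le_root : ∀ v, le v root
  up_total : ∀ u v w, le u v → le u w → le v w ∨ le w v

/-- A planar rooted tree: a rooted tree together with its depth-first ordering,
a linear order on the vertices arising from the total orderings of the incoming
edges at each vertex via a clockwise depth-first tree walk.  Such linear orders
are exactly those in which ancestors precede descendants and every principal
downset of the tree order is an interval. -/
structure PRTree extends RTree where
  dfle : V → V → Prop
  dfle_refl : ∀ v, dfle v v
  dfle_antisymm : ∀ v w, dfle v w → dfle w v → v = w
  dfle_trans : ∀ u v w, dfle u v → dfle v w → dfle u w
  dfle_total : ∀ v w, dfle v w ∨ dfle w v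
  dfle_of_le : ∀ v w, le v w → dfle w v
  downset_interval : ∀ u a b c, le a u → le c u → dfle a b → dfle b c → le b u

/-- A morphism in the category `PT`: an order embedding of vertex sets which
preserves the root and the depth-first ordering. -/
structure PTHom (T U : PRTree) where
  toFun : T.V → U.V
  inj : Function.Injective toFun
  map_le : ∀ v w, T.le v w → U.le (toFun v) (toFun w)
  reflect_le : ∀ v w, U.le (toFun v) (toFun w) → T.le v w
  map_root : toFun T.root = U.root
  map_dfle : ∀ v w, T.dfle v w → U.dfle (toFun v) (toFun w)

def PTHom.id (T : PRTree) : PTHom T T where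
  toFun := fun v => v
  inj := fun _ _ h => h
  map_le := fun _ _ h => h
  reflect_le := fun _ _ h => h
  map_root := rfl
  map_dfle := fun _ _ h => h

def PTHom.comp {T U W : PRTree} (g : PTHom U W) (f : PTHom T U) :
    PTHom T W where
  toFun := fun v => g.toFun (f.toFun v)
  inj := fun _ _ h => f.inj (g.inj h)
  map_le := fun v w h => g.map_le _ _ (f.map_le v w h)
  reflect_le := fun v w h => f.reflect_le _ _ (g.reflect_le _ _ h)
  map_root := by show g.toFun (f.toFun T.root) = W.root; rw [f.map_root, g.map_root]
  map_dfle := fun v w h => g.map_dfle _ _ (f.map_dfle v w h)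



namespace RelKruskal

inductive KTree (L : Type) : Type
  | node : L → List (KTree L) → KTree L

namespace KTree

variable {L : Type}

def size : KTree L → ℕ
  | node _ ts => (ts.attach.map fun t => size t.1).sum + 1
decreasing_by
  have := List.sizeOf_lt_of_mem t.2
  simp only [KTree.node.sizeOf_spec]
  omega

def children : KTree L → List (KTree L)
  | node _ ts => ts

def rootLabel : KTree L → L
  | node a _ => a

theorem size_node (a : L) (ts : List (KTree L)) :
    size (node a ts) = (ts.map size).sum + 1 := by
  rw [size]
  congr 1
  exact congrArg List.sum (List.attach_map_val (l := ts) (f := size))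

theorem size_lt_of_mem {t : KTree L} {a : L} {ts : List (KTree L)} (h : t ∈ ts) :
    size t < size (node a ts) := by
  rw [size_node]
  exact Nat.lt_succ_of_le (List.single_le_sum (fun b _ => Nat.zero_le b) _
    (List.mem_map_of_mem (f := size) h))

theorem size_lt_of_mem' {t u : KTree L} (h : t ∈ u.children) : size t < size u := by
  cases u with
  | node a ts => exact size_lt_of_mem h

mutual
inductive Emb : KTree L → KTree L → Prop
  | top {a : L} {ts us : List (KTree L)} : EmbL ts us → Emb (.node a ts) (.node a us)
  | child {t u : KTree L} {b : L} {us : List (KTree L)} :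
      u ∈ us → Emb t u → Emb t (.node b us)

inductive EmbL : List (KTree L) → List (KTree L) → Prop
  | nil {us : List (KTree L)} : EmbL [] us
  | cons {t : KTree L} {ts : List (KTree L)} {u : KTree L} {us : List (KTree L)} :
      Emb t u → EmbL ts us → EmbL (t :: ts) (u :: us)
  | skip {ts : List (KTree L)} {u : KTree L} {us : List (KTree L)} :
      EmbL ts us → EmbL ts (u :: us)
end

theorem embL_of_sublistForall₂ {ts us : List (KTree L)}
    (h : List.SublistForall₂ Emb ts us) : EmbL ts us := by
  induction h with
  | nil => exact .nil
  | cons h _ ih => exact .cons h ih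
  | cons_right _ ih => exact .skip ih

theorem sublistForall₂_of_embL {vs us : List (KTree L)}
    (h : EmbL us vs) : List.SublistForall₂ Emb us vs := by
  induction vs generalizing us with
  | nil => cases h; exact .nil
  | cons v vs ih =>
    cases h with
    | nil => exact .nil
    | cons h1 h2 => exact .cons h1 (ih h2)
    | skip h2 => exact .cons_right (ih h2)

theorem embL_refl_of (ts : List (KTree L)) (h : ∀ t ∈ ts, Emb t t) : EmbL ts ts := by
  induction ts with
  | nil => exact .nil
  | cons t ts ih =>
    exact .cons (h t (List.mem_cons_self (a := t) (l := ts))) (ih fun t' h' => h t' (List.mem_cons_of_mem _ h'))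

theorem emb_refl_aux : ∀ (n : ℕ) (t : KTree L), size t < n → Emb t t := by
  intro n
  induction n with
  | zero => intro t ht; omega
  | succ n ih =>
    intro t ht
    cases t with
    | node a ts =>
      exact .top (embL_refl_of ts fun t' h' =>
        ih t' (lt_of_lt_of_le (size_lt_of_mem h') (Nat.lt_succ_iff.mp ht)))

theorem emb_refl (t : KTree L) : Emb t t := emb_refl_aux (size t + 1) t (Nat.lt_succ_self _)

instance : IsRefl (KTree L) Emb := ⟨emb_refl⟩

theorem embL_mem {vs us : List (KTree L)} (h : EmbL us vs) :
    ∀ {u}, u ∈ us → ∃ v ∈ vs, Emb u v := by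
  induction vs generalizing us with
  | nil =>
    cases h
    intro u hu; cases hu
  | cons v vs ih =>
    cases h with
    | nil => intro u hu; cases hu
    | cons h1 h2 =>
      intro x hx
      rcases List.mem_cons.mp hx with rfl | hx
      · exact ⟨_, List.mem_cons_self, h1⟩
      · obtain ⟨v', hv, he⟩ := ih h2 hx
        exact ⟨v', List.mem_cons_of_mem _ hv, he⟩
    | skip h2 =>
      intro x hx
      obtain ⟨v', hv, he⟩ := ih h2 hx
      exact ⟨v', List.mem_cons_of_mem _ hv, he⟩

theorem embL_trans_aux {vs us : List (KTree L)} (h : EmbL us vs) :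
    (∀ v ∈ vs, ∀ t u : KTree L, Emb t u → Emb u v → Emb t v) →
    ∀ {ts : List (KTree L)}, EmbL ts us → EmbL ts vs := by
  induction vs generalizing us with
  | nil =>
    cases h
    intro _ ts hts
    cases hts
    exact .nil
  | cons v vs ih =>
    cases h with
    | nil =>
      intro _ ts hts
      cases hts
      exact .nil
    | cons huv h2 =>
      intro hv ts hts
      cases hts with
      | nil => exact .nil
      | cons h1 h3 =>
        exact .cons (hv _ List.mem_cons_self _ _ h1 huv)
          (ih h2 (fun v hm => hv v (List.mem_cons_of_mem _ hm)) h3)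
      | skip h3 => exact .skip (ih h2 (fun v hm => hv v (List.mem_cons_of_mem _ hm)) h3)
    | skip h2 =>
      intro hv ts hts
      exact .skip (ih h2 (fun v hm => hv v (List.mem_cons_of_mem _ hm)) hts)

theorem emb_trans_aux : ∀ (n : ℕ) (v t u : KTree L), size v < n →
    Emb t u → Emb u v → Emb t v := by
  intro n
  induction n with
  | zero => intro v _ _ h; omega
  | succ n ih =>
    intro v t u hsz h1 h2
    cases h2 with
    | top hL =>
      rename_i a us vs
      cases h1 with
      | top hL' =>
        exact .top (embL_trans_aux hL
          (fun v' hm t' u' a b =>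
            ih v' t' u' (lt_of_lt_of_le (size_lt_of_mem hm) (Nat.lt_succ_iff.mp hsz)) a b) hL')
      | child hm h' =>
        obtain ⟨v', hv', he⟩ := embL_mem hL hm
        exact .child hv'
          (ih v' t _ (lt_of_lt_of_le (size_lt_of_mem hv') (Nat.lt_succ_iff.mp hsz)) h' he)
    | child hm h' =>
      exact .child hm
        (ih _ t u (lt_of_lt_of_le (size_lt_of_mem hm) (Nat.lt_succ_iff.mp hsz)) h1 h')

theorem emb_trans {t u v : KTree L} (h1 : Emb t u) (h2 : Emb u v) : Emb t v :=
  emb_trans_aux (size v + 1) v t u (Nat.lt_succ_self _) h1 h2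

instance : IsTrans (KTree L) Emb := ⟨fun _ _ _ => emb_trans⟩

instance : IsPreorder (KTree L) Emb where
  refl := emb_refl
  trans := fun _ _ _ => emb_trans

theorem exists_strictMono_const {L : Type} [Finite L] (a : ℕ → L) :
    ∃ φ : ℕ → ℕ, StrictMono φ ∧ ∀ i j, a (φ i) = a (φ j) := by
  classical
  obtain ⟨y, hy⟩ := Finite.exists_infinite_fiber a
  haveI : Infinite (a ⁻¹' {y}) := hy
  refine ⟨Nat.orderEmbeddingOfSet (a ⁻¹' {y}), (Nat.orderEmbeddingOfSet _).strictMono, ?_⟩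
  have hmem : ∀ n, a (Nat.orderEmbeddingOfSet (a ⁻¹' {y}) n) = y := by
    intro n
    have h2 : (Nat.orderEmbeddingOfSet (a ⁻¹' {y})) n ∈
        Set.range (Nat.orderEmbeddingOfSet (a ⁻¹' {y})) := ⟨n, rfl⟩
    rw [Nat.orderEmbeddingOfSet_range] at h2
    rw [Set.mem_preimage, Set.mem_singleton_iff] at h2
    exact h2
  intro i j
  rw [hmem i, hmem j]

theorem emb_pwo {L : Type} [Finite L] :
    (Set.univ : Set (KTree L)).PartiallyWellOrderedOn Emb := by
  classical
  rw [Set.PartiallyWellOrderedOn.iff_not_exists_isMinBadSeq size]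
  rintro ⟨f, hbad, hmin⟩
  set S : Set (KTree L) := {t | ∃ n, t ∈ (f n).children} with hSdef
  have hchild : ∀ n t, t ∈ (f n).children → Emb t (f n) := by
    intro n t ht
    cases hfn : f n with
    | node a ts =>
      refine Emb.child ?_ (emb_refl t)
      rw [hfn] at ht
      exact ht
  have hS : S.PartiallyWellOrderedOn Emb := by
    rw [Set.partiallyWellOrderedOn_iff_exists_lt]
    intro g hg
    by_contra hcon
    push_neg at hcon
    have hgbad : ∀ i j, i < j → ¬Emb (g i) (g j) := hcon
    choose m hm using hg
    obtain ⟨k0, hk0⟩ : ∃ k0, ∀ k, m k0 ≤ m k := by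
      obtain ⟨k0, hk0⟩ := Set.mem_range.mp (Nat.sInf_mem (Set.range_nonempty m))
      exact ⟨k0, fun k => hk0 ▸ Nat.sInf_le ⟨k, rfl⟩⟩
    set g' : ℕ → KTree L := fun i => if i < m k0 then f i else g (k0 + (i - m k0)) with hg'def
    refine hmin (m k0) g' (fun i hi => (if_pos hi).symm) ?_ ⟨fun _ => Set.mem_univ _, ?_⟩
    · have : g' (m k0) = g k0 := by simp [hg'def]
      rw [this]
      exact lt_of_lt_of_le (size_lt_of_mem' (hm k0)) le_rfl
    · intro p q hpq hemb
      simp only [hg'def] at hemb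
      by_cases hq : q < m k0
      · exact hbad.2 p q hpq (by rwa [if_pos (hpq.trans hq), if_pos hq] at hemb)
      · push_neg at hq
        by_cases hp : p < m k0
        · rw [if_pos hp, if_neg (not_lt.mpr hq)] at hemb
          set k := k0 + (q - m k0)
          have h2 : Emb (g k) (f (m k)) := hchild _ _ (hm k)
          exact hbad.2 p (m k) (lt_of_lt_of_le hp (hk0 k)) (emb_trans hemb h2)
        · push_neg at hp
          rw [if_neg (not_lt.mpr hp), if_neg (not_lt.mpr hq)] at hemb
          exact hgbad _ _ (by omega) hemb
  have hS2 := Set.PartiallyWellOrderedOn.partiallyWellOrderedOn_sublistForall₂ Emb hS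
  obtain ⟨φ, hφ, hlab⟩ := exists_strictMono_const (fun n => (f n).rootLabel)
  obtain ⟨i, j, hij, hemb⟩ := hS2.exists_lt (f := fun n => (f (φ n)).children)
    (fun n t ht => ⟨φ n, ht⟩)
  refine hbad.2 (φ i) (φ j) (hφ hij) ?_
  have h1 := hlab i j
  cases hfi : f (φ i) with
  | node a ts =>
    cases hfj : f (φ j) with
    | node b us =>
      have hab : a = b := by
        have := h1
        rw [hfi, hfj] at this
        exact this
      subst hab
      rw [hfi, hfj] at hemb
      exact Emb.top (embL_of_sublistForall₂ hemb)


inductive IsPos : KTree L → List ℕ → Prop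
  | nil (t : KTree L) : IsPos t []
  | cons {a : L} {ts : List (KTree L)} {i : ℕ} {p : List ℕ} {t : KTree L} :
      ts[i]? = some t → IsPos t p → IsPos (.node a ts) (i :: p)

inductive LabelAt : KTree L → List ℕ → L → Prop
  | root (a : L) (ts : List (KTree L)) : LabelAt (.node a ts) [] a
  | child {a : L} {ts : List (KTree L)} {i : ℕ} {p : List ℕ} {t : KTree L} {b : L} :
      ts[i]? = some t → LabelAt t p b → LabelAt (.node a ts) (i :: p) b

theorem labelAt_unique {t : KTree L} {p : List ℕ} {b b' : L}
    (h1 : LabelAt t p b) (h2 : LabelAt t p b') : b = b' := by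
  induction h1 generalizing b' with
  | root a ts => cases h2; rfl
  | child hget hl ih =>
    cases h2 with
    | child hget' hl' =>
      have heq := hget.symm.trans hget'
      injection heq with heq
      subst heq
      exact ih hl'

theorem lex_cons_same {i : ℕ} {p q : List ℕ} :
    List.Lex (· < ·) (i :: p) (i :: q) ↔ List.Lex (· < ·) p q := by
  constructor
  · intro h
    cases h with
    | cons h => exact h
    | rel h => exact absurd h (lt_irrefl i)
  · exact List.Lex.cons

theorem lex_cons_cases {i j : ℕ} {p q : List ℕ} (h : List.Lex (· < ·) (i :: p) (j :: q)) :
    i < j ∨ (i = j ∧ List.Lex (· < ·) p q) := by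
  cases h with
  | rel h => exact Or.inl h
  | cons h => exact Or.inr ⟨rfl, h⟩

/-- The bundle of properties of a position map extracted from an embedding. -/
def Good (t u : KTree L) (F : List ℕ → List ℕ) : Prop :=
  (∀ p, IsPos t p → IsPos u (F p)) ∧
  (∀ p q, IsPos t p → IsPos t q → (p <+: q ↔ F p <+: F q)) ∧
  (∀ p q, IsPos t p → IsPos t q → List.Lex (· < ·) p q → List.Lex (· < ·) (F p) (F q)) ∧
  (∀ p b, LabelAt t p b → LabelAt u (F p) b)

theorem embL_good {a b : L} {ts us : List (KTree L)} (hab : a = b) (hL : EmbL ts us)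
    (IH : ∀ u' ∈ us, ∀ t' : KTree L, Emb t' u' → ∃ F, Good t' u' F) :
    ∃ F, Good (.node a ts) (.node b us) F ∧ F [] = [] := by
  classical
  obtain ⟨l, hf, hs⟩ := List.sublistForall₂_iff.mp (sublistForall₂_of_embL hL)
  obtain ⟨σ, hσ⟩ := List.sublist_iff_exists_fin_orderEmbedding_get_eq.mp hs
  have hlen : ts.length = l.length := hf.length_eq
  have hpt : ∀ (i : Fin ts.length),
      Emb (ts.get i) (us.get (σ (Fin.cast hlen i))) := by
    intro i
    have h2 := (List.forall₂_iff_get.mp hf).2 i.1 i.2 (hlen ▸ i.2)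
    rw [hσ ⟨i.1, hlen ▸ i.2⟩] at h2
    exact h2
  have hI : ∀ i : Fin ts.length, ∃ F, Good (ts.get i) (us.get (σ (Fin.cast hlen i))) F :=
    fun i => IH _ (List.get_mem us _) _ (hpt i)
  choose Fs hFs using hI
  have hτinj : ∀ i j : Fin ts.length,
      (σ (Fin.cast hlen i)).1 = (σ (Fin.cast hlen j)).1 → i = j := by
    intro i j h
    have h2 := σ.injective (Fin.ext h)
    have h3 := congrArg Fin.val h2
    exact Fin.ext h3
  have hτmono : ∀ i j : Fin ts.length, i.1 < j.1 →
      (σ (Fin.cast hlen i)).1 < (σ (Fin.cast hlen j)).1 := by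
    intro i j h
    exact σ.strictMono (show (Fin.cast hlen i) < (Fin.cast hlen j) from h)
  set τ' : ℕ → ℕ :=
    fun i => if h : i < ts.length then (σ (Fin.cast hlen ⟨i, h⟩)).1 else 0 with hτ'def
  set Fs' : ℕ → List ℕ → List ℕ :=
    fun i => if h : i < ts.length then Fs ⟨i, h⟩ else (fun q => q) with hFs'def
  have hτ'eq : ∀ (i : ℕ) (h : i < ts.length), τ' i = (σ (Fin.cast hlen ⟨i, h⟩)).1 :=
    fun i h => dif_pos h
  have hFs'eq : ∀ (i : ℕ) (h : i < ts.length), Fs' i = Fs ⟨i, h⟩ :=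
    fun i h => dif_pos h
  have hget_us : ∀ (i : ℕ) (h : i < ts.length),
      us[τ' i]? = some (us.get (σ (Fin.cast hlen ⟨i, h⟩))) := by
    intro i h
    rw [hτ'eq i h]
    exact List.getElem?_eq_getElem (σ (Fin.cast hlen ⟨i, h⟩)).isLt
  have hτ'inj : ∀ (i j : ℕ), i < ts.length → j < ts.length → τ' i = τ' j → i = j := by
    intro i j hi hj h
    rw [hτ'eq i hi, hτ'eq j hj] at h
    exact congrArg Fin.val (hτinj ⟨i, hi⟩ ⟨j, hj⟩ h)
  have hτ'mono : ∀ (i j : ℕ), i < ts.length → j < ts.length → i < j → τ' i < τ' j := by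
    intro i j hi hj h
    rw [hτ'eq i hi, hτ'eq j hj]
    exact hτmono ⟨i, hi⟩ ⟨j, hj⟩ h
  refine ⟨fun p => List.casesOn p [] (fun i p' => τ' i :: Fs' i p'), ⟨?_, ?_, ?_, ?_⟩, rfl⟩
  · -- positions
    intro p hp
    cases p with
    | nil => exact .nil _
    | cons i p' =>
      cases hp with
      | cons hget hpos =>
        obtain ⟨hi, ht⟩ := List.getElem?_eq_some_iff.mp hget
        subst ht
        show IsPos (.node b us) (τ' i :: Fs' i p')
        rw [hFs'eq i hi]
        refine .cons (hget_us i hi) ((hFs ⟨i, hi⟩).1 p' ?_)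
        rw [List.get_eq_getElem]
        exact hpos
  · -- prefix iff
    intro p q hp hq
    cases p with
    | nil =>
      exact iff_of_true (List.nil_prefix) (List.nil_prefix)
    | cons i p' =>
      cases hp with
      | cons hget hpos =>
      obtain ⟨hi, ht⟩ := List.getElem?_eq_some_iff.mp hget
      subst ht
      cases q with
      | nil =>
        refine iff_of_false (by simp [List.prefix_nil]) ?_
        show ¬ ((τ' i :: Fs' i p') <+: [])
        simp [List.prefix_nil]
      | cons j q' =>
        cases hq with
        | cons hget' hqos =>
        obtain ⟨hj, ht'⟩ := List.getElem?_eq_some_iff.mp hget'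
        subst ht'
        show (i :: p' <+: j :: q') ↔ ((τ' i :: Fs' i p') <+: (τ' j :: Fs' j q'))
        rw [List.cons_prefix_cons, List.cons_prefix_cons]
        by_cases hij : i = j
        · subst hij
          have htail := (hFs ⟨i, hi⟩).2.1 p' q'
            (by rw [List.get_eq_getElem]; exact hpos)
            (by rw [List.get_eq_getElem]; exact hqos)
          rw [hFs'eq i hi]
          constructor
          · rintro ⟨-, h⟩
            exact ⟨rfl, htail.mp h⟩
          · rintro ⟨-, h⟩
            exact ⟨rfl, htail.mpr h⟩
        · exact iff_of_false (fun h => hij h.1) (fun h => hij (hτ'inj i j hi hj h.1))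
  · -- lex
    intro p q hp hq hlex
    cases p with
    | nil =>
      cases q with
      | nil => cases hlex
      | cons j q' =>
        show List.Lex (· < ·) [] (τ' j :: Fs' j q')
        exact List.Lex.nil
    | cons i p' =>
      cases q with
      | nil => cases hlex
      | cons j q' =>
        cases hp with
        | cons hget hpos =>
        cases hq with
        | cons hget' hqos =>
        obtain ⟨hi, ht⟩ := List.getElem?_eq_some_iff.mp hget
        subst ht
        obtain ⟨hj, ht'⟩ := List.getElem?_eq_some_iff.mp hget'
        subst ht'
        show List.Lex (· < ·) (τ' i :: Fs' i p') (τ' j :: Fs' j q')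
        cases hlex with
        | cons h =>
          rw [hFs'eq _ hj]
          exact List.Lex.cons ((hFs ⟨_, hj⟩).2.2.1 p' q'
            (by rw [List.get_eq_getElem]; exact hpos)
            (by rw [List.get_eq_getElem]; exact hqos) h)
        | rel h =>
          exact List.Lex.rel (hτ'mono i j hi hj h)
  · -- labels
    intro p c hl
    cases hl with
    | root =>
      subst hab
      exact .root _ _
    | child hget hl' =>
      rename_i i p' t'
      obtain ⟨hi, ht⟩ := List.getElem?_eq_some_iff.mp hget
      subst ht
      show LabelAt (.node b us) (τ' i :: Fs' i p') c
      rw [hFs'eq i hi]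
      exact .child (hget_us i hi) ((hFs ⟨i, hi⟩).2.2.2 p' c
        (by rw [List.get_eq_getElem]; exact hl'))

theorem emb_good_aux : ∀ (n : ℕ) (u t : KTree L), size u < n → Emb t u → ∃ F, Good t u F := by
  intro n
  induction n with
  | zero => intro u t h; omega
  | succ n ih =>
    intro u t hsz he
    cases he with
    | top hL =>
      obtain ⟨F, hF, -⟩ := embL_good rfl hL (fun u' hm t' h' =>
        ih u' t' (lt_of_lt_of_le (size_lt_of_mem hm) (Nat.lt_succ_iff.mp hsz)) h')
      exact ⟨F, hF⟩
    | child hm h' =>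
      rename_i u' bb us
      obtain ⟨F, hF⟩ := ih u' t
        (lt_of_lt_of_le (size_lt_of_mem hm) (Nat.lt_succ_iff.mp hsz)) h'
      obtain ⟨j, hj⟩ := List.mem_iff_getElem?.mp hm
      refine ⟨fun p => j :: F p, ?_, ?_, ?_, ?_⟩
      · intro p hp
        exact .cons hj (hF.1 p hp)
      · intro p q hp hq
        rw [List.cons_prefix_cons]
        constructor
        · intro h
          exact ⟨rfl, (hF.2.1 p q hp hq).mp h⟩
        · rintro ⟨-, h⟩
          exact (hF.2.1 p q hp hq).mpr h
      · intro p q hp hq hlex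
        exact List.Lex.cons (hF.2.2.1 p q hp hq hlex)
      · intro p c hl
        exact .child hj (hF.2.2.2 p c hl)

theorem emb_good {t u : KTree L} (h : Emb t u) : ∃ F, Good t u F :=
  emb_good_aux (size u + 1) u t (Nat.lt_succ_self _) h

def Remb (t u : KTree L) : Prop :=
  t.rootLabel = u.rootLabel ∧ EmbL t.children u.children

theorem remb_good {t u : KTree L} (h : Remb t u) : ∃ F, Good t u F ∧ F [] = [] := by
  cases t with
  | node a ts =>
    cases u with
    | node b us =>
      exact embL_good h.1 h.2 (fun u' _ t' h' => emb_good h')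

theorem exists_remb {L : Type} [Finite L] (g : ℕ → KTree L) :
    ∃ i j, i < j ∧ Remb (g i) (g j) := by
  obtain ⟨φ, hφ, hlab⟩ := exists_strictMono_const (fun n => (g n).rootLabel)
  have hH := Set.PartiallyWellOrderedOn.partiallyWellOrderedOn_sublistForall₂ Emb
    (emb_pwo (L := L))
  obtain ⟨i, j, hij, he⟩ := hH.exists_lt (f := fun n => (g (φ n)).children)
    (fun n t _ => Set.mem_univ t)
  exact ⟨φ i, φ j, hφ hij, hlab i j, embL_of_sublistForall₂ he⟩

end KTree


open KTree in
def subTree (U : PRTree) (c : U.V) : PRTree where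
  V := {v : U.V // U.le v c}
  finite := by have := U.finite; exact Subtype.finite
  le x y := U.le x.1 y.1
  le_refl v := U.le_refl v.1
  le_antisymm v w h1 h2 := Subtype.ext (U.le_antisymm _ _ h1 h2)
  le_trans u v w h1 h2 := U.le_trans _ _ _ h1 h2
  root := ⟨c, U.le_refl c⟩
  le_root v := v.2
  up_total u v w h1 h2 := U.up_total _ _ _ h1 h2
  dfle x y := U.dfle x.1 y.1
  dfle_refl v := U.dfle_refl v.1
  dfle_antisymm v w h1 h2 := Subtype.ext (U.dfle_antisymm _ _ h1 h2)
  dfle_trans u v w h1 h2 := U.dfle_trans _ _ _ h1 h2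
  dfle_total v w := U.dfle_total v.1 w.1
  dfle_of_le v w h := U.dfle_of_le _ _ h
  downset_interval u a b c' h1 h2 h3 h4 := U.downset_interval _ _ _ _ h1 h2 h3 h4

open KTree in
theorem encode (L : Type) : ∀ (n : ℕ) (U : PRTree) (ℓ : U.V → L), Nat.card U.V ≤ n →
    ∃ (t : KTree L) (e : U.V → List ℕ),
      (∀ v, IsPos t (e v)) ∧
      (∀ p, IsPos t p → ∃ v, e v = p) ∧
      (∀ v w, U.le v w ↔ e w <+: e v) ∧
      (∀ v w, U.dfle v w ↔ (e v = e w ∨ List.Lex (· < ·) (e v) (e w))) ∧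
      e U.root = [] ∧
      (∀ v, LabelAt t (e v) (ℓ v)) := by
  intro n
  induction n with
  | zero =>
    intro U ℓ hcard
    exfalso
    haveI := U.finite
    haveI : Nonempty U.V := ⟨U.root⟩
    have := Nat.card_pos (α := U.V)
    omega
  | succ n ih =>
    intro U ℓ hcard
    classical
    haveI := U.finite
    haveI : Fintype U.V := Fintype.ofFinite _
    set R := U.root with hR
    set C : U.V → Prop := fun c => c ≠ R ∧ ∀ w, U.le c w → w = c ∨ w = R with hCdef
    have step1 : ∀ v, v ≠ R → ∃ c, C c ∧ U.le v c := by
      intro v hv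
      letI : PartialOrder U.V :=
        { le := U.le, le_refl := U.le_refl,
          le_trans := U.le_trans, le_antisymm := U.le_antisymm }
      have hfin : Set.Finite {w | U.le v w ∧ w ≠ R} := Set.toFinite _
      obtain ⟨c, hcmem, hcmax⟩ := hfin.exists_maximalFor id _ ⟨v, U.le_refl v, hv⟩
      refine ⟨c, ⟨hcmem.2, ?_⟩, hcmem.1⟩
      intro w hw
      by_cases hwR : w = R
      · exact Or.inr hwR
      · exact Or.inl (U.le_antisymm _ _ (hcmax (j := w) ⟨U.le_trans _ _ _ hcmem.1 hw, hwR⟩ hw) hw)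
    have uniqC : ∀ v c c', C c → C c' → U.le v c → U.le v c' → c = c' := by
      intro v c c' hc hc' h1 h2
      rcases U.up_total v c c' h1 h2 with h | h
      · exact ((hc.2 c' h).resolve_right hc'.1).symm
      · exact (hc'.2 c h).resolve_right hc.1
    have step1' : ∀ v : U.V, ∃ c, v ≠ R → (C c ∧ U.le v c) := by
      intro v
      by_cases hv : v = R
      · exact ⟨R, fun h => absurd hv h⟩
      · obtain ⟨c, h⟩ := step1 v hv
        exact ⟨c, fun _ => h⟩
    choose top htop using step1'
    have htop_le : ∀ v, v ≠ R → U.le v (top v) := fun v h => (htop v h).2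
    have htop_C : ∀ v, v ≠ R → C (top v) := fun v h => (htop v h).1
    have hvnotR : ∀ c v : U.V, U.le v c → C c → v ≠ R := by
      intro c v hle hc hvR
      subst hvR
      exact hc.1 (U.le_antisymm c R (U.le_root c) hle)
    have htop_eq : ∀ v c : U.V, C c → U.le v c → top v = c := by
      intro v c hc hle
      have hv : v ≠ R := hvnotR c v hle hc
      exact uniqC v _ c (htop_C v hv) hc (htop_le v hv) hle
    have hdesc : ∀ v w, v ≠ R → w ≠ R → U.le v w → top v = top w := by
      intro v w hv hw hle
      exact htop_eq v (top w) (htop_C w hw) (U.le_trans _ _ _ hle (htop_le w hw))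
    have hkey : ∀ v w, v ≠ R → w ≠ R → top v ≠ top w → U.dfle v w →
        U.dfle (top v) (top w) := by
      intro v w hv hw hne hvw
      rcases U.dfle_total (top v) (top w) with h | h
      · exact h
      · exfalso
        have h1 : U.dfle (top v) v := U.dfle_of_le v (top v) (htop_le v hv)
        have h2 : U.dfle (top w) v := U.dfle_trans _ _ _ h h1
        have h3 : U.le v (top w) :=
          U.downset_interval (top w) (top w) v w (U.le_refl _) (htop_le w hw) h2 hvw
        exact hne (htop_eq v (top w) (htop_C w hw) h3)
    have hkey2 : ∀ v w, v ≠ R → w ≠ R → top v ≠ top w →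
        (U.dfle v w ↔ U.dfle (top v) (top w)) := by
      intro v w hv hw hne
      constructor
      · exact hkey v w hv hw hne
      · intro h
        rcases U.dfle_total v w with h' | h'
        · exact h'
        · have h2 := hkey w v hw hv (Ne.symm hne) h'
          exact absurd (U.dfle_antisymm _ _ h h2) hne
    -- sorting the children
    haveI : IsTrans U.V U.dfle := ⟨U.dfle_trans⟩
    haveI : IsAntisymm U.V U.dfle := ⟨U.dfle_antisymm⟩
    haveI : IsTotal U.V U.dfle := ⟨U.dfle_total⟩
    letI : DecidableRel U.dfle := Classical.decRel _
    letI : DecidablePred C := Classical.decPred _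
    set cs : List U.V := (Finset.univ.filter C).sort U.dfle with hcs
    have hmemcs : ∀ c, c ∈ cs ↔ C c := by
      intro c
      rw [hcs, Finset.mem_sort, Finset.mem_filter]
      simp
    have hnodup : cs.Nodup := Finset.sort_nodup _ _
    have hsorted : cs.Pairwise U.dfle := Finset.pairwise_sort _ _
    -- the subtrees
    have hcard_sub : ∀ c : U.V, C c → Nat.card {v : U.V // U.le v c} ≤ n := by
      intro c hc
      have hnR : ¬ U.le R c := fun h => hc.1 (U.le_antisymm c R (U.le_root c) h)
      have h2 : Fintype.card {v : U.V // U.le v c} < Fintype.card U.V :=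
        Fintype.card_subtype_lt (x := R) hnR
      have h3 : Nat.card U.V = Fintype.card U.V := Nat.card_eq_fintype_card
      have h4 : Nat.card {v : U.V // U.le v c} = Fintype.card {v : U.V // U.le v c} :=
        Nat.card_eq_fintype_card
      omega
    have hIH : ∀ c : U.V, ∃ (t : KTree L) (e : (subTree U c).V → List ℕ), C c →
        ((∀ v, IsPos t (e v)) ∧
        (∀ p, IsPos t p → ∃ v, e v = p) ∧
        (∀ v w, (subTree U c).le v w ↔ e w <+: e v) ∧
        (∀ v w, (subTree U c).dfle v w ↔ (e v = e w ∨ List.Lex (· < ·) (e v) (e w))) ∧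
        e (subTree U c).root = [] ∧
        (∀ v, LabelAt t (e v) (ℓ v.1))) := by
      intro c
      by_cases hc : C c
      · obtain ⟨t, e, h⟩ := ih (subTree U c) (fun v => ℓ v.1) (hcard_sub c hc)
        exact ⟨t, e, fun _ => h⟩
      · exact ⟨.node (ℓ c) [], fun _ => [], fun hc' => absurd hc' hc⟩
    choose tC eC hP using hIH
    set ts : List (KTree L) := cs.map tC with hts
    set t : KTree L := .node (ℓ R) ts with ht
    set idx : U.V → ℕ := fun c => cs.idxOf c with hidx
    have hidx_lt : ∀ c, C c → idx c < cs.length :=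
      fun c hc => List.idxOf_lt_length_iff.mpr ((hmemcs c).mpr hc)
    have hcs_get_idx : ∀ c (hc : C c), cs[idx c]'(hidx_lt c hc) = c :=
      fun c hc => List.getElem_idxOf _
    have hidx_inj : ∀ c c', C c → C c' → idx c = idx c' → c = c' := by
      intro c c' hc hc' h
      have h1 := hcs_get_idx c hc
      have h2 := hcs_get_idx c' hc'
      rw [← h1, ← h2]
      congr 1
    have hsorted_lt : ∀ (i j : ℕ) (hi : i < cs.length) (hj : j < cs.length), i < j →
        U.dfle (cs[i]'hi) (cs[j]'hj) := by
      intro i j hi hj hij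
      have := hsorted.rel_get_of_lt (a := ⟨i, hi⟩) (b := ⟨j, hj⟩) hij
      simpa using this
    have hidx_dfle : ∀ c c', C c → C c' → c ≠ c' → (idx c < idx c' ↔ U.dfle c c') := by
      intro c c' hc hc' hne
      constructor
      · intro h
        have h2 := hsorted_lt (idx c) (idx c') (hidx_lt c hc) (hidx_lt c' hc') h
        rwa [hcs_get_idx c hc, hcs_get_idx c' hc'] at h2
      · intro h
        rcases Nat.lt_trichotomy (idx c) (idx c') with hlt | heq | hgt
        · exact hlt
        · exact absurd (hidx_inj c c' hc hc' heq) hne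
        · have h2 := hsorted_lt (idx c') (idx c) (hidx_lt c' hc') (hidx_lt c hc) hgt
          rw [hcs_get_idx c hc, hcs_get_idx c' hc'] at h2
          exact absurd (U.dfle_antisymm _ _ h h2) hne
    set e : U.V → List ℕ :=
      fun v => if h : v = R then [] else idx (top v) :: eC (top v) ⟨v, htop_le v h⟩
      with he
    have heR : e R = [] := dif_pos rfl
    have heNe : ∀ v (h : v ≠ R),
        e v = idx (top v) :: eC (top v) ⟨v, htop_le v h⟩ := fun v h => dif_neg h
    have heNe' : ∀ (v c : U.V) (hc : C c) (hle : U.le v c),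
        e v = idx c :: eC c ⟨v, hle⟩ := by
      intro v c hc hle
      have hv : v ≠ R := hvnotR c v hle hc
      have htopv : top v = c := htop_eq v c hc hle
      rw [heNe v hv]
      subst htopv
      rfl
    have hts_get : ∀ (i : ℕ) (h : i < cs.length), ts[i]? = some (tC (cs[i]'h)) := by
      intro i h
      rw [hts, List.getElem?_map, List.getElem?_eq_getElem h]
      rfl
    have hts_get_idx : ∀ c (hc : C c), ts[idx c]? = some (tC c) := by
      intro c hc
      rw [hts_get (idx c) (hidx_lt c hc), hcs_get_idx c hc]
    refine ⟨t, e, ?_, ?_, ?_, ?_, heR, ?_⟩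
    · -- positions
      intro v
      by_cases hv : v = R
      · subst hv
        rw [heR]
        exact .nil t
      · rw [heNe v hv]
        exact .cons (hts_get_idx (top v) (htop_C v hv))
          ((hP (top v) (htop_C v hv)).1 ⟨v, htop_le v hv⟩)
    · -- surjectivity
      intro p hp
      rw [ht] at hp
      cases p with
      | nil => exact ⟨R, heR⟩
      | cons i q =>
        cases hp with
        | cons hget hpos =>
          obtain ⟨hi', ht'⟩ := List.getElem?_eq_some_iff.mp hget
          have hi : i < cs.length := by rwa [hts, List.length_map] at hi'
          have htsi : ts[i]'hi' = tC (cs[i]'hi) := by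
            have := hts_get i hi
            rw [List.getElem?_eq_getElem hi'] at this
            injection this
          rw [htsi] at ht'
          subst ht'
          have hcC : C (cs[i]'hi) := (hmemcs _).mp (List.getElem_mem hi)
          obtain ⟨v', hv'⟩ := (hP _ hcC).2.1 q hpos
          refine ⟨v'.1, ?_⟩
          rw [heNe' v'.1 (cs[i]'hi) hcC v'.2]
          have h1 : idx (cs[i]'hi) = i := by
            have h2 := hcs_get_idx _ hcC
            exact (hnodup.getElem_inj_iff (hi := hidx_lt _ hcC) (hj := hi)).mp h2
          rw [h1]
          exact congrArg (i :: ·) hv'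
    · -- le iff prefix
      intro v w
      by_cases hw : w = R
      · subst hw
        exact iff_of_true (U.le_root v) (heR ▸ List.nil_prefix)
      · by_cases hv : v = R
        · subst hv
          refine iff_of_false (fun h => hw (U.le_antisymm w R (U.le_root w) h)) (fun h => ?_)
          rw [heR, heNe w hw] at h
          simp [List.prefix_nil] at h
        · by_cases htw : top w = top v
          · have hcv := htop_C v hv
            have hlew : U.le w (top v) := htw ▸ htop_le w hw
            rw [heNe' v (top v) hcv (htop_le v hv), heNe' w (top v) hcv hlew,
              List.cons_prefix_cons]
            have hsub := (hP (top v) hcv).2.2.1 ⟨v, htop_le v hv⟩ ⟨w, hlew⟩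
            constructor
            · intro h
              exact ⟨rfl, hsub.mp h⟩
            · rintro ⟨-, h⟩
              exact hsub.mpr h
          · refine iff_of_false (fun h => htw (hdesc v w hv hw h).symm) (fun h => ?_)
            rw [heNe v hv, heNe w hw, List.cons_prefix_cons] at h
            exact htw (hidx_inj _ _ (htop_C w hw) (htop_C v hv) h.1)
    · -- dfle iff
      intro v w
      by_cases hv : v = R
      · subst hv
        by_cases hw : w = R
        · subst hw
          exact iff_of_true (U.dfle_refl R) (Or.inl rfl)
        · refine iff_of_true (U.dfle_of_le w R (U.le_root w)) (Or.inr ?_)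
          rw [heR, heNe w hw]
          exact List.Lex.nil
      · by_cases hw : w = R
        · subst hw
          refine iff_of_false
            (fun h => hv (U.dfle_antisymm _ _ h (U.dfle_of_le v R (U.le_root v)))) (fun h => ?_)
          rw [heR, heNe v hv] at h
          rcases h with h | h
          · exact nomatch h
          · cases h
        · by_cases htw : top v = top w
          · have hcv := htop_C v hv
            have hlew : U.le w (top v) := htw ▸ htop_le w hw
            rw [heNe' v (top v) hcv (htop_le v hv), heNe' w (top v) hcv hlew]
            have hsub := (hP (top v) hcv).2.2.2.1 ⟨v, htop_le v hv⟩ ⟨w, hlew⟩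
            constructor
            · intro h
              rcases hsub.mp h with h' | h'
              · exact Or.inl (by rw [h'])
              · exact Or.inr (List.Lex.cons h')
            · intro h
              apply hsub.mpr
              rcases h with h' | h'
              · injection h' with h1 h2
                exact Or.inl h2
              · exact Or.inr (lex_cons_same.mp h')
          · rw [heNe v hv, heNe w hw]
            have hci := hidx_dfle (top v) (top w) (htop_C v hv) (htop_C w hw) htw
            constructor
            · intro h
              exact Or.inr (List.Lex.rel (hci.mpr ((hkey2 v w hv hw htw).mp h)))
            · intro h
              rcases h with h' | h'
              · injection h' with h1 h2
                exact absurd (hidx_inj _ _ (htop_C v hv) (htop_C w hw) h1) htw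
              · rcases lex_cons_cases h' with hr | ⟨heq, -⟩
                · exact (hkey2 v w hv hw htw).mpr (hci.mp hr)
                · exact absurd (hidx_inj _ _ (htop_C v hv) (htop_C w hw) heq) htw
    · -- labels
      intro v
      by_cases hv : v = R
      · subst hv
        rw [heR, ht]
        exact .root _ _
      · rw [heNe' v (top v) (htop_C v hv) (htop_le v hv)]
        exact .child (hts_get_idx (top v) (htop_C v hv))
          ((hP (top v) (htop_C v hv)).2.2.2.2.2 ⟨v, htop_le v hv⟩)

end RelKruskal

theorem PTHom.ext' {T U : PRTree} {f g : PTHom T U} (h : ∀ x, f.toFun x = g.toFun x) : f = g := by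
  cases f
  cases g
  have : _ = _ := funext h
  subst this
  rfl

open RelKruskal RelKruskal.KTree

/-- Relative Kruskal tree theorem: for every planar rooted tree `T`, the
divisibility quasi-order on the set of `PT`-morphisms with domain `T` is a
well-quasi-order. -/
theorem relative_kruskal (T : PRTree)
    (s : ℕ → Σ U : PRTree, PTHom T U) :
    ∃ i j, i < j ∧ ∃ h : PTHom (s i).1 (s j).1, (s j).2 = h.comp (s i).2 := by
  classical
  haveI := T.finite
  haveI : Fintype T.V := Fintype.ofFinite _
  haveI : Finite (Option T.V) := inferInstance
  set ℓ : ∀ k, (s k).1.V → Option T.V :=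
    fun k u => if h : ∃ x, (s k).2.toFun x = u then some (Classical.choose h) else none
    with hℓ
  have hA : ∀ k x, ℓ k ((s k).2.toFun x) = some x := by
    intro k x
    have hex : ∃ y, (s k).2.toFun y = (s k).2.toFun x := ⟨x, rfl⟩
    rw [hℓ]
    simp only [dif_pos hex]
    exact congrArg some ((s k).2.inj (Classical.choose_spec hex))
  have hB : ∀ k u x, ℓ k u = some x → (s k).2.toFun x = u := by
    intro k u x h
    rw [hℓ] at h
    dsimp only at h
    by_cases hex : ∃ y, (s k).2.toFun y = u
    · simp only [dif_pos hex] at h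
      injection h with h
      subst h
      exact Classical.choose_spec hex
    · rw [dif_neg hex] at h
      cases h
  have hE := fun k => encode (Option T.V) (Nat.card (s k).1.V) (s k).1 (ℓ k) le_rfl
  choose tE eE hpos hsurj hle hdfle hroot hlab using hE
  obtain ⟨i, j, hij, hremb⟩ := exists_remb (L := Option T.V) tE
  obtain ⟨F, hgood, hF0⟩ := remb_good hremb
  obtain ⟨hGpos, hGpre, hGlex, hGlab⟩ := hgood
  have hei_inj : ∀ k (v w : (s k).1.V), eE k v = eE k w → v = w := by
    intro k v w h
    have h1 : (s k).1.le v w := (hle k v w).mpr (by rw [h])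
    have h2 : (s k).1.le w v := (hle k w v).mpr (by rw [h])
    exact (s k).1.le_antisymm v w h1 h2
  have hFv : ∀ v : (s i).1.V, IsPos (tE j) (F (eE i v)) := fun v => hGpos _ (hpos i v)
  set φ : (s i).1.V → (s j).1.V := fun v => Classical.choose (hsurj j _ (hFv v)) with hφdef
  have hφ : ∀ v, eE j (φ v) = F (eE i v) := fun v => Classical.choose_spec (hsurj j _ (hFv v))
  have hFinj : ∀ v w : (s i).1.V, F (eE i v) = F (eE i w) → v = w := by
    intro v w h
    apply hei_inj i
    have hp1 : eE i v <+: eE i w :=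
      (hGpre _ _ (hpos i v) (hpos i w)).mpr (by rw [h])
    have hp2 : eE i w <+: eE i v :=
      (hGpre _ _ (hpos i w) (hpos i v)).mpr (by rw [h])
    exact hp1.sublist.antisymm hp2.sublist
  refine ⟨i, j, hij, ⟨φ, ?_, ?_, ?_, ?_, ?_⟩, ?_⟩
  · -- injective
    intro v w h
    apply hFinj
    rw [← hφ v, ← hφ w]
    exact congrArg (eE j) h
  · -- map_le
    intro v w h
    refine (hle j _ _).mpr ?_
    rw [hφ v, hφ w]
    exact (hGpre _ _ (hpos i w) (hpos i v)).mp ((hle i v w).mp h)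
  · -- reflect_le
    intro v w h
    refine (hle i v w).mpr ?_
    refine (hGpre _ _ (hpos i w) (hpos i v)).mpr ?_
    rw [← hφ v, ← hφ w]
    exact (hle j _ _).mp h
  · -- map_root
    apply hei_inj j
    rw [hφ, hroot i, hF0, hroot j]
  · -- map_dfle
    intro v w h
    rcases (hdfle i v w).mp h with h' | h'
    · have : v = w := hei_inj i v w h'
      subst this
      exact (s j).1.dfle_refl _
    · refine (hdfle j _ _).mpr (Or.inr ?_)
      rw [hφ v, hφ w]
      exact hGlex _ _ (hpos i v) (hpos i w) h'
  · -- composition equation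
    apply PTHom.ext'
    intro x
    show (s j).2.toFun x = φ ((s i).2.toFun x)
    have l1 := hlab i ((s i).2.toFun x)
    rw [hA i x] at l1
    have l2 := hGlab _ _ l1
    rw [← hφ] at l2
    have l3 := hlab j (φ ((s i).2.toFun x))
    have l4 : ℓ j (φ ((s i).2.toFun x)) = some x := labelAt_unique l3 l2
    exact hB j _ x l4
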